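/- arXiv:2211.07961 — 3 statements merged into one kernel-verified Lean document; each statement's English description precedes it below -/
import Mathlib

section
/- A function F : (ℕ → ℕ) → ℕ has the property that every preimage F⁻¹{n} is Fσ (a countable union of closed sets in Baire space) if and only if there exists a function f on finite strings such that for every x, f(x↾n) = F(x) for all sufficiently large n. -/
/-!
For `⇒`, enumerate the closed pieces of all the fibres as one sequence `D k`, labelled by the value
`c k` that `F` takes on `D k`. On a string `s`, let `f s` be the label of the first piece that meets
the cylinder of `s`. If `x` lies first in `D k₀`, then each of the finitely many earlier pieces is
closed and misses `x`, so it misses all small enough cylinders around `x`; hence from some length on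
the first piece meeting the cylinder of `x↾n` is `D k₀`, and `f (x↾n) = c k₀ = F x`.

For `⇐`, `F x = b` iff `f (x↾n) = b` for all large `n`, and each `{x | f (x↾n) = b}` is clopen.
-/

open Filter Topology Set

section ClosedCover

variable {X : Type*} [TopologicalSpace X]

theorem eventually_sInf_inter_nonempty_eq {D : ℕ → Set X} (hD : ∀ k, IsClosed (D k)) {x : X}
    (hx : ∃ k, x ∈ D k) {V : ℕ → Set X} (hxV : ∀ n, x ∈ V n)
    (hV : Tendsto V atTop (𝓝 x).smallSets) :
    ∀ᶠ n in atTop, sInf {k | (V n ∩ D k).Nonempty} = sInf {k | x ∈ D k} := by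
  set k₀ := sInf {k | x ∈ D k}
  have hdisj : ∀ᶠ n in atTop, ∀ k ∈ Iio k₀, V n ⊆ (D k)ᶜ :=
    (eventually_all_finite (finite_Iio k₀)).2 fun k hk =>
      hV.eventually <| eventually_smallSets_subset.2 <|
        (hD k).isOpen_compl.mem_nhds (Nat.notMem_of_lt_sInf hk)
  filter_upwards [hdisj] with n hn
  refine IsLeast.csInf_eq ⟨⟨x, hxV n, Nat.sInf_mem hx⟩, fun k ⟨y, hyV, hyD⟩ => ?_⟩
  exact not_lt.1 fun hlt => hn k hlt hyV hyD

theorem exists_isClosed_iUnion_eq_preimage_of_eventually_eq {β : Type*} {F : X → β}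
    {g : ℕ → X → β} (hg : ∀ n, IsLocallyConstant (g n)) (hF : ∀ x, ∀ᶠ n in atTop, g n x = F x)
    (b : β) : ∃ Cs : ℕ → Set X, (∀ i, IsClosed (Cs i)) ∧ F ⁻¹' {b} = ⋃ i, Cs i := by
  refine ⟨fun N => ⋂ n ≥ N, {x | g n x = b},
    fun N => isClosed_biInter fun n _ => (hg n).isClosed_fiber b, ?_⟩
  ext x
  simp only [mem_preimage, mem_singleton_iff, mem_iUnion, mem_iInter, mem_ofPred_eq]
  obtain ⟨N, hN⟩ := eventually_atTop.1 (hF x)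
  constructor
  · rintro rfl
    exact ⟨N, hN⟩
  · rintro ⟨M, hM⟩
    rw [← hN (max N M) (le_max_left _ _)]
    exact hM _ (le_max_right _ _)

theorem exists_isClosed_cover_of_preimage_eq_iUnion {F : X → ℕ}
    (hF : ∀ b, ∃ Cs : ℕ → Set X, (∀ i, IsClosed (Cs i)) ∧ F ⁻¹' {b} = ⋃ i, Cs i) :
    ∃ (D : ℕ → Set X) (c : ℕ → ℕ), (∀ k, IsClosed (D k)) ∧ (∀ x, ∃ k, x ∈ D k) ∧
      ∀ k, ∀ x ∈ D k, F x = c k := by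
  choose Cs hCs hFCs using hF
  refine ⟨fun k => Cs k.unpair.1 k.unpair.2, fun k => k.unpair.1, fun k => hCs _ _,
    fun x => ?_, fun k x hx => ?_⟩
  · have hx : x ∈ F ⁻¹' {F x} := rfl
    rw [hFCs] at hx
    obtain ⟨i, hi⟩ := mem_iUnion.1 hx
    exact ⟨Nat.pair (F x) i, by simpa using hi⟩
  · rw [← mem_singleton_iff, ← mem_preimage, hFCs]
    exact mem_iUnion.2 ⟨_, hx⟩

end ClosedCover

namespace PiNat

theorem tendsto_cylinder_smallSets {E : ℕ → Type*} [∀ n, TopologicalSpace (E n)]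
    [∀ n, DiscreteTopology (E n)] (x : ∀ n, E n) :
    Tendsto (cylinder x) atTop (𝓝 x).smallSets := by
  refine tendsto_smallSets_iff.2 fun t ht => ?_
  obtain ⟨_, ⟨y, N, rfl⟩, hx, hsub⟩ := (isTopologicalBasis_cylinders E).mem_nhds_iff.1 ht
  rw [← mem_cylinder_iff_eq.1 hx] at hsub
  exact eventually_atTop.2 ⟨N, fun n hn => (cylinder_anti x hn).trans hsub⟩

end PiNat

section InitSeg

variable {α : Type*}

def initSeg (x : ℕ → α) (n : ℕ) : List α :=
  List.ofFn fun i : Fin n => x i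

@[simp]
theorem length_initSeg (x : ℕ → α) (n : ℕ) : (initSeg x n).length = n :=
  List.length_ofFn

theorem initSeg_eq_initSeg_iff {x y : ℕ → α} {n : ℕ} :
    initSeg y n = initSeg x n ↔ y ∈ PiNat.cylinder x n := by
  simp [initSeg, List.ofFn_inj, funext_iff, PiNat.mem_cylinder_iff, Fin.forall_iff]

variable [TopologicalSpace α] [DiscreteTopology α]

theorem isLocallyConstant_initSeg (n : ℕ) : IsLocallyConstant fun x : ℕ → α => initSeg x n :=
  (IsLocallyConstant.iff_exists_open _).2 fun x =>
    ⟨PiNat.cylinder x n, PiNat.isOpen_cylinder _ x n, PiNat.self_mem_cylinder x n,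
      fun _ hy => initSeg_eq_initSeg_iff.2 hy⟩

theorem exists_eventually_eq_initSeg_of_isClosed_cover {β : Type*} {F : (ℕ → α) → β}
    {D : ℕ → Set (ℕ → α)} {c : ℕ → β} (hD : ∀ k, IsClosed (D k)) (hcover : ∀ x, ∃ k, x ∈ D k)
    (hc : ∀ k, ∀ x ∈ D k, F x = c k) :
    ∃ f : List α → β, ∀ x, ∀ᶠ n in atTop, f (initSeg x n) = F x := by
  refine ⟨fun s => c (sInf {k | ({y | initSeg y s.length = s} ∩ D k).Nonempty}), fun x => ?_⟩
  filter_upwards [eventually_sInf_inter_nonempty_eq hD (hcover x) (PiNat.self_mem_cylinder x)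
    (PiNat.tendsto_cylinder_smallSets x)] with n hn
  have hcyl : {y | initSeg y (initSeg x n).length = initSeg x n} = PiNat.cylinder x n := by
    ext y
    simp [initSeg_eq_initSeg_iff]
  simp only [hcyl, hn]
  exact (hc _ x (Nat.sInf_mem (hcover x))).symm

end InitSeg

theorem stmt_7 (F : (ℕ → ℕ) → ℕ) :
    (∀ n : ℕ, ∃ Cs : ℕ → Set (ℕ → ℕ), (∀ i, IsClosed (Cs i)) ∧ F ⁻¹' {n} = ⋃ i, Cs i) ↔
      ∃ f : List ℕ → ℕ, ∀ x : ℕ → ℕ, ∃ N : ℕ, ∀ n, N ≤ n →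
        f (List.ofFn fun i : Fin n => x i) = F x := by
  constructor
  · intro hF
    obtain ⟨D, c, hD, hcover, hc⟩ := exists_isClosed_cover_of_preimage_eq_iUnion hF
    obtain ⟨f, hf⟩ := exists_eventually_eq_initSeg_of_isClosed_cover hD hcover hc
    exact ⟨f, fun x => eventually_atTop.1 (hf x)⟩
  · rintro ⟨f, hf⟩
    exact exists_isClosed_iUnion_eq_preimage_of_eventually_eq
      (fun n => (isLocallyConstant_initSeg n).comp f) fun x => eventually_atTop.2 (hf x)
end

section
/- Let T be a set of finite strings of natural numbers closed under prefixes, and suppose T has no infinite branch (there is no x : ℕ → ℕ all of whose finite initial segments lie in T). Define the Kleene–Brouwer order on T by: σ <_KB τ iff τ is a proper prefix of σ, or there is i < min(|σ|,|τ|) with σ↾i = τ↾i and σ(i) < τ(i). Then <_KB is a linear order on T which is well-founded; i.e., it well-orders T. -/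
/-!
Appending a symbol `⊤` above every natural number turns `<_KB` into the lexicographic order
(a proper extension of `τ` then falls below `τ`), so `<_KB` is a strict total order.

For well-foundedness, let `f` be `<_KB`-descending. If every `f n` extends `s`, no `f (n + 1)`
equals `s`, and the entry of `f (n + 1)` right after `s` is non-increasing in `n`, hence
eventually constant, say `a`; so a tail of `f` extends `s ++ [a]`. Iterating gives prefixes of
every length, which fit together into an infinite branch of `T`.
-/

/-- The Kleene–Brouwer order on finite strings of naturals. -/
def kb (σ τ : List ℕ) : Prop :=
  (τ <+: σ ∧ τ ≠ σ) ∨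
    ∃ i, i < σ.length ∧ i < τ.length ∧ σ.take i = τ.take i ∧ σ.getD i 0 < τ.getD i 0

theorem not_kb_nil_left (τ : List ℕ) : ¬ kb [] τ := by
  simp [kb]

theorem kb_nil_right {σ : List ℕ} : kb σ [] ↔ σ ≠ [] := by
  simp [kb]

theorem kb_cons_cons {a b : ℕ} {σ τ : List ℕ} :
    kb (a :: σ) (b :: τ) ↔ a < b ∨ a = b ∧ kb σ τ := by
  simp only [kb, List.cons_prefix_cons, ne_eq, List.cons.injEq, List.length_cons]
  constructor
  · rintro (⟨⟨rfl, hp⟩, hne⟩ | ⟨_ | i, hi, hi', ht, hlt⟩)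
    · exact .inr ⟨rfl, .inl ⟨hp, by simpa using hne⟩⟩
    · exact .inl (by simpa using hlt)
    · simp only [List.take_succ_cons, List.cons.injEq, List.getD_cons_succ] at ht hlt
      exact .inr ⟨ht.1, .inr ⟨i, by omega, by omega, ht.2, hlt⟩⟩
  · rintro (hlt | ⟨rfl, ⟨hp, hne⟩ | ⟨i, hi, hi', ht, hlt⟩⟩)
    · exact .inr ⟨0, by omega, by omega, rfl, by simpa using hlt⟩
    · exact .inl ⟨⟨rfl, hp⟩, by simpa using hne⟩
    · exact .inr ⟨i + 1, by omega, by omega, by simpa using ht, by simpa using hlt⟩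

def kbKey (σ : List ℕ) : List (WithTop ℕ) :=
  σ.map (↑) ++ [⊤]

theorem kbKey_injective : Function.Injective kbKey := fun _ _ h =>
  List.map_injective_iff.2 WithTop.coe_injective (List.append_cancel_right h)

theorem kb_iff_kbKey_lt {σ τ : List ℕ} : kb σ τ ↔ kbKey σ < kbKey τ := by
  induction σ generalizing τ with
  | nil => cases τ <;> simp [not_kb_nil_left, kbKey, List.cons_lt_cons_iff]
  | cons a σ ih =>
    cases τ with
    | nil => simp [kb_nil_right, kbKey, List.cons_lt_cons_iff]
    | cons b τ => simp [kb_cons_cons, ih, kbKey, List.cons_lt_cons_iff]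

instance : IsStrictTotalOrder (List ℕ) kb := by
  have : kb = Function.onFun (· < ·) kbKey := by
    ext σ τ
    exact kb_iff_kbKey_lt
  rw [this]
  exact kbKey_injective.isStrictTotalOrder_onFun (· < ·)

theorem kb_append_left_iff (s : List ℕ) {σ τ : List ℕ} : kb (s ++ σ) (s ++ τ) ↔ kb σ τ := by
  induction s with
  | nil => rfl
  | cons a s ih => simp [kb_cons_cons, ih]

theorem not_kb_of_prefix {σ τ : List ℕ} (h : σ <+: τ) : ¬ kb σ τ := by
  obtain ⟨ρ, rfl⟩ := h
  nth_rewrite 1 [← List.append_nil σ]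
  rw [kb_append_left_iff]
  exact not_kb_nil_left ρ

section DescendingSequence

variable {f : ℕ → List ℕ}

theorem exists_append_singleton_prefix (hf : ∀ n, kb (f (n + 1)) (f n)) {s : List ℕ}
    (hs : ∀ n, s <+: f n) : ∃ a N, ∀ n, s ++ [a] <+: f (n + N) := by
  have hext : ∀ n, ∃ b t, f (n + 1) = s ++ b :: t := by
    intro n
    obtain ⟨_ | ⟨b, t⟩, h⟩ := hs (n + 1)
    · exact absurd (h ▸ hf n) (by simpa using not_kb_of_prefix (hs n))
    · exact ⟨b, t, h.symm⟩
  choose b t hbt using hext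
  have hb : Antitone b := antitone_nat_of_succ_le fun n => by
    have h := hf (n + 1)
    rw [hbt, hbt, kb_append_left_iff, kb_cons_cons] at h
    omega
  obtain ⟨N, hN⟩ := WellFoundedLT.antitone_chain_condition hb
  refine ⟨b N, N + 1, fun n => ⟨t (n + N), ?_⟩⟩
  rw [← Nat.add_assoc, hbt, hN (n + N) (by omega)]
  simp

theorem exists_prefix_of_length (hf : ∀ n, kb (f (n + 1)) (f n)) (k : ℕ) :
    ∃ s : List ℕ, s.length = k ∧ ∃ N, ∀ n, s <+: f (n + N) := by
  induction k with
  | zero => exact ⟨[], rfl, 0, fun _ => List.nil_prefix⟩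
  | succ k ih =>
    obtain ⟨s, hlen, N, hN⟩ := ih
    obtain ⟨a, M, hM⟩ := exists_append_singleton_prefix (f := fun n => f (n + N))
      (fun n => by simpa [Nat.add_right_comm] using hf (n + N)) hN
    exact ⟨s ++ [a], by simp [hlen], M + N, fun n => by simpa [Nat.add_assoc] using hM n⟩

end DescendingSequence

theorem exists_ofFn_eq_of_prefix {s : ℕ → List ℕ} (hlen : ∀ k, (s k).length = k)
    (hpre : ∀ k, s k <+: s (k + 1)) :
    ∃ x : ℕ → ℕ, ∀ n, List.ofFn (fun i : Fin n => x i) = s n := by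
  have hsnoc : ∀ k, ∃ c, s (k + 1) = s k ++ [c] := by
    intro k
    obtain ⟨r, hr⟩ := hpre k
    have hr1 : r.length = 1 := by simpa [hlen] using congrArg List.length hr
    obtain ⟨c, rfl⟩ := List.length_eq_one_iff.1 hr1
    exact ⟨c, hr.symm⟩
  choose x hx using hsnoc
  refine ⟨x, fun n => ?_⟩
  induction n with
  | zero => simpa using (List.length_eq_zero_iff.1 (hlen 0)).symm
  | succ n ih =>
    rw [List.ofFn_succ_last, hx, ← ih]
    simp

theorem exists_branch_of_kb_descending {T : Set (List ℕ)}
    (hpref : ∀ σ τ : List ℕ, σ <+: τ → τ ∈ T → σ ∈ T) {f : ℕ → List ℕ} (hT : ∀ n, f n ∈ T)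
    (hf : ∀ n, kb (f (n + 1)) (f n)) :
    ∃ x : ℕ → ℕ, ∀ n : ℕ, (List.ofFn fun i : Fin n => x i) ∈ T := by
  choose s hlen N hN using exists_prefix_of_length hf
  have hpre : ∀ k, s k <+: s (k + 1) := fun k => by
    have h1 := hN k (N (k + 1))
    have h2 := hN (k + 1) (N k)
    rw [Nat.add_comm (N k)] at h2
    exact List.prefix_of_prefix_length_le h1 h2 (by simp [hlen])
  obtain ⟨x, hx⟩ := exists_ofFn_eq_of_prefix hlen hpre
  exact ⟨x, fun n => hx n ▸ hpref _ _ (hN n 0) (hT _)⟩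

theorem stmt_14 (T : Set (List ℕ))
    (hpref : ∀ σ τ : List ℕ, σ <+: τ → τ ∈ T → σ ∈ T)
    (hwf : ¬ ∃ x : ℕ → ℕ, ∀ n : ℕ, (List.ofFn fun i : Fin n => x i) ∈ T) :
    IsStrictTotalOrder {σ // σ ∈ T} (fun a b => kb a.1 b.1) ∧
      WellFounded (fun a b : {σ // σ ∈ T} => kb a.1 b.1) := by
  refine ⟨Subtype.val_injective.isStrictTotalOrder_onFun (r := kb),
    wellFounded_iff_isEmpty_descending_chain.2 ⟨fun ⟨f, hf⟩ => hwf ?_⟩⟩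
  exact exists_branch_of_kb_descending hpref (fun n => (f n).2) hf
end

section
/- Let C be a chain in a partial order (P, ≤), order-isomorphic to (ℕ, ≤), and let S ⊆ P be order-convex with upward closure W and V = W \ S. Then C ∩ S is infinite if and only if C ∩ W is infinite and C ∩ V is finite. -/
theorem stmt_15 {P : Type*} [PartialOrder P] (C : Set P) (e : ℕ → P)
    (hmono : StrictMono e) (hrange : Set.range e = C)
    (S : Set P)
    (hconv : ∀ s p t : P, s ≤ p → p ≤ t → s ∈ S → t ∈ S → p ∈ S) :
    (C ∩ S).Infinite ↔
      (C ∩ {p | ∃ s ∈ S, s ≤ p}).Infinite ∧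
        (C ∩ ({p | ∃ s ∈ S, s ≤ p} \ S)).Finite := by
  constructor
  · intro h
    constructor
    · exact h.mono (Set.inter_subset_inter_right C (fun p hp => ⟨p, hp, le_refl p⟩))
    · -- show it's empty
      have hidx : {n | e n ∈ S}.Infinite := by
        have : (e ⁻¹' (C ∩ S)).Infinite :=
          h.preimage (by rw [hrange]; exact Set.inter_subset_left)
        apply this.mono
        intro n hn; exact hn.2
      have hempty : C ∩ ({p | ∃ s ∈ S, s ≤ p} \ S) = ∅ := by
        ext p
        simp only [Set.mem_inter_iff, Set.mem_diff, Set.mem_setOf_eq, Set.mem_empty_iff_false,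
          iff_false]
        rintro ⟨hpC, ⟨s, hs, hsp⟩, hpS⟩
        rw [← hrange] at hpC
        obtain ⟨n, rfl⟩ := hpC
        obtain ⟨m, hm, hnm⟩ := hidx.exists_gt n
        exact hpS (hconv s (e n) (e m) hsp (hmono.monotone hnm.le) hs hm)
      rw [hempty]; exact Set.finite_empty
  · rintro ⟨hW, hV⟩
    have hsub : C ∩ {p | ∃ s ∈ S, s ≤ p} ⊆
        (C ∩ S) ∪ (C ∩ ({p | ∃ s ∈ S, s ≤ p} \ S)) := by
      rintro p ⟨hpC, hpW⟩
      by_cases hpS : p ∈ S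
      · exact Or.inl ⟨hpC, hpS⟩
      · exact Or.inr ⟨hpC, hpW, hpS⟩
    rcases Set.infinite_union.mp (hW.mono hsub) with h | h
    · exact h
    · exact absurd h hV.not_infinite
end
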